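/- arXiv:1603.07271 — 2 statements merged into one kernel-verified Lean document; each statement's English description precedes it below -/
import Mathlib

section
/- Let 𝓡 be a cell space. The induced right semi-action ⋊ semi-commutes with the left action ⇀: for every subgroup H of G with {g_{m₀,m} : m ∈ M} ⊆ H, for every m ∈ M and every h ∈ H there exists h₀ ∈ H₀ such that for every 𝔤 ∈ G/G₀ one has (h ⇀ m) ⋊ 𝔤 = h ⇀ (m ⋊ (h₀·𝔤)). -/
open MulAction

/-- The right quotient-set semi-action `⋊` induced by a coordinate system
`(m₀, coord)`: `m ⋊ gG₀ = (coord m * g) • m₀`. -/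
def semiAct {G M : Type*} [Group G] [MulAction G M] (m₀ : M) (coord : M → G)
    (m : M) (𝔤 : G ⧸ stabilizer G m₀) : M :=
  coord m • ofQuotientStabilizer G m₀ 𝔤

theorem semiAct_smul {G M : Type*} [Group G] [MulAction G M] (m₀ : M) (coord : M → G)
    (m : M) (g : G) (𝔤 : G ⧸ stabilizer G m₀) :
    semiAct m₀ coord m (g • 𝔤) = (coord m * g) • ofQuotientStabilizer G m₀ 𝔤 := by
  rw [semiAct, ofQuotientStabilizer_smul, mul_smul]

theorem inv_mul_mem_stabilizer_of_smul_eq {G M : Type*} [Group G] [MulAction G M] {a b : G}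
    {x : M} (hab : a • x = b • x) : a⁻¹ * b ∈ stabilizer G x := by
  rw [mem_stabilizer_iff, mul_smul, ← hab, inv_smul_smul]

theorem semiAct_semiCommutes_general {G M : Type*} [Group G] [MulAction G M]
    (m₀ : M) (coord : M → G)
    (hc : ∀ m : M, coord m • m₀ = m) :
    ∀ H : Subgroup G, (∀ m : M, coord m ∈ H) →
      ∀ m : M, ∀ h ∈ H, ∃ h₀ ∈ H, h₀ ∈ stabilizer G m₀ ∧
        ∀ 𝔤 : G ⧸ stabilizer G m₀,
          semiAct m₀ coord (h • m) 𝔤 = h • semiAct m₀ coord m (h₀ • 𝔤) := by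
  intro H hH m h hh
  -- `h * coord m` and `coord (h • m)` both send `m₀` to `h • m`, so they differ by `h₀ ∈ G₀`.
  refine ⟨(h * coord m)⁻¹ * coord (h • m),
    H.mul_mem (H.inv_mem (H.mul_mem hh (hH m))) (hH (h • m)),
    inv_mul_mem_stabilizer_of_smul_eq (by rw [mul_smul, hc, hc]), fun 𝔤 => ?_⟩
  rw [semiAct_smul, smul_smul, ← mul_assoc, mul_inv_cancel_left, semiAct]

/-- Let `𝓡` be a cell space.  The induced right semi-action `⋊` semi-commutes with
the left action `⇀`: for every subgroup `H` of `G` with `{g_{m₀,m} : m ∈ M} ⊆ H`,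
for every `m ∈ M` and every `h ∈ H` there exists `h₀ ∈ H₀` such that for every
`𝔤 ∈ G/G₀` one has `(h ⇀ m) ⋊ 𝔤 = h ⇀ (m ⋊ (h₀·𝔤))`. -/
theorem semiAct_semiCommutes {G M : Type*} [Group G] [MulAction G M]
    (htrans : ∀ m m' : M, ∃ g : G, g • m = m')
    (m₀ : M) (coord : M → G)
    (hc : ∀ m : M, coord m • m₀ = m) (hc0 : coord m₀ = 1) :
    ∀ H : Subgroup G, (∀ m : M, coord m ∈ H) →
      ∀ m : M, ∀ h ∈ H, ∃ h₀ ∈ H, h₀ ∈ stabilizer G m₀ ∧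
        ∀ 𝔤 : G ⧸ stabilizer G m₀,
          semiAct m₀ coord (h • m) 𝔤 = h • semiAct m₀ coord m (h₀ • 𝔤) :=
  semiAct_semiCommutes_general m₀ coord hc
end

section
/- (Uniform Curtis–Hedlund–Lyndon theorem.) Let 𝓡 be a semi-proper cell space, let Q be a set, let Q^M carry the uniformity of discrete convergence on compacta, let Δ : Q^M → Q^M be a map, and let H be a subgroup of G with {g_{m₀,m} : m ∈ M} ⊆ H. Then the following are equivalent: (1) Δ is the global transition function of a semi-cellular automaton (Q, N, δ) over 𝓡 whose local transition function δ is •_{H₀}-invariant and which has a compact essential neighbourhood; (2) Δ is ⇀_H-equivariant and uniformly continuous. -/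
open MulAction Filter

/-- The left action `•` of the stabiliser `G₀` on local configurations `ℓ ∈ Q^N`,
`(g₀ • ℓ)(n) = ℓ(g₀⁻¹ · n)`. -/
def bulletAct {G M : Type*} [Group G] [MulAction G M] {m₀ : M}
    {N : Set (G ⧸ stabilizer G m₀)}
    (hN : ∀ g₀ ∈ stabilizer G m₀, ∀ n ∈ N, g₀ • n ∈ N) {Q : Type*}
    (g₀ : G) (hg₀ : g₀ ∈ stabilizer G m₀) (ℓ : N → Q) : N → Q :=
  fun n => ℓ ⟨g₀⁻¹ • (n : G ⧸ stabilizer G m₀), hN g₀⁻¹ (inv_mem hg₀) _ n.2⟩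

/-- The left action `⇀` of `G` on global configurations `c ∈ Q^M`,
`(g ⇀ c)(m) = c(g⁻¹ ⇀ m)`. -/
def shiftConf {G M : Type*} [Group G] [MulAction G M] {Q : Type*}
    (g : G) (c : M → Q) : M → Q :=
  fun m => c (g⁻¹ • m)

/-- The global transition function `Δ` of the semi-cellular automaton `(Q, N, δ)`:
`Δ(c)(m) = δ(n ↦ c(m ⋊ n))`. -/
def globalTrans {G M : Type*} [Group G] [MulAction G M] (m₀ : M) (coord : M → G)
    {Q : Type*} (N : Set (G ⧸ stabilizer G m₀)) (δ : (N → Q) → Q)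
    (c : M → Q) : M → Q :=
  fun m => δ fun n => c (semiAct m₀ coord m (n : G ⧸ stabilizer G m₀))

/-- The uniformity of discrete convergence on compacta on `Q^M`: a base of
entourages is given by the sets `𝔈(K) = {(c,c') : c|_K = c'|_K}` for `K ⊆ M`
compact. -/
noncomputable def discConvUniformity (Q M : Type*) [TopologicalSpace M] :
    UniformSpace (M → Q) :=
  UniformSpace.ofCore
    { uniformity := ⨅ (K : Set M) (_ : IsCompact K),
        Filter.principal {p : (M → Q) × (M → Q) | ∀ x ∈ K, p.1 x = p.2 x}
      refl := le_iInf fun K => le_iInf fun _ => by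
        rw [Filter.le_principal_iff, Filter.mem_principal]
        rintro ⟨c, c'⟩ h
        simp only [SetRel.mem_id] at h
        subst h
        intro x _
        rfl
      symm := by
        refine Filter.tendsto_iInf.mpr fun K => Filter.tendsto_iInf.mpr fun hK => ?_
        refine Filter.tendsto_principal.mpr ?_
        have hmem : {p : (M → Q) × (M → Q) | ∀ x ∈ K, p.1 x = p.2 x} ∈
            ⨅ (K : Set M) (_ : IsCompact K),
              Filter.principal {p : (M → Q) × (M → Q) | ∀ x ∈ K, p.1 x = p.2 x} := by
          refine Filter.mem_iInf_of_mem K ?_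
          exact Filter.mem_iInf_of_mem hK (Filter.mem_principal_self _)
        filter_upwards [hmem] with p hp x hx
        exact (hp x hx).symm
      comp := le_iInf fun K => le_iInf fun hK => by
        have hmem : {p : (M → Q) × (M → Q) | ∀ x ∈ K, p.1 x = p.2 x} ∈
            ⨅ (K : Set M) (_ : IsCompact K),
              Filter.principal {p : (M → Q) × (M → Q) | ∀ x ∈ K, p.1 x = p.2 x} :=
          Filter.mem_iInf_of_mem K (Filter.mem_iInf_of_mem hK (Filter.mem_principal_self _))
        refine Filter.lift'_le hmem ?_
        rw [Filter.le_principal_iff, Filter.mem_principal]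
        rintro ⟨c, c'⟩ ⟨b, hb1, hb2⟩ x hx
        exact (hb1 x hx).trans (hb2 x hx)
      }

/-- A left group set `(M, G, ⇀)`, with `M` a topological space and `G` a topological
group, is *semi-proper* if the action is continuous and its action map
`α : G × M → M × M, (g,m) ↦ (g ⇀ m, m)` is semi-proper, i.e. for each compact
`K ⊆ M × M`, every transversal of the family of fibres `{α⁻¹(k) : k ∈ K}` is
included in a compact subset of `G × M`. -/
def SemiProperSMul (G M : Type*) [Group G] [MulAction G M]
    [TopologicalSpace G] [TopologicalSpace M] : Prop :=
  Continuous (fun p : G × M => p.1 • p.2) ∧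
  ∀ K : Set (M × M), IsCompact K →
    ∀ t : M × M → G × M,
      (∀ k ∈ K, (∃ p : G × M, ((p.1 • p.2, p.2) : M × M) = k) →
        (((t k).1 • (t k).2, (t k).2) : M × M) = k) →
      ∃ C : Set (G × M), IsCompact C ∧
        {p : G × M | ∃ k ∈ K,
          (∃ q : G × M, ((q.1 • q.2, q.2) : M × M) = k) ∧ p = t k} ⊆ C

/-!
Direction (1) ⇒ (2): the coordinate cocycle `(g_{m₀,h⁻¹m})⁻¹ h⁻¹ g_{m₀,m}` lies in `H₀`, so
`•_{H₀}`-invariance of `δ` is exactly `⇀_H`-equivariance of `Δ`; and `Δ(c)|_K` depends only on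
`c` on `{g_{m₀,m} : m ∈ K} ⇀ (m₀ ⋊ E)`, which is compact because semi-properness puts the
coordinates of a compact set inside a compact subset of `G`.

Direction (2) ⇒ (1): take `N = G/G₀` and `δ(ℓ) = Δ(m ↦ ℓ(g_{m₀,m}G₀))(m₀)`. Equivariance under
the coordinates recovers `Δ` from `δ`, equivariance under `H₀` gives invariance, and uniform
continuity at the compact set `{m₀}` yields a compact `K` with `Δ(c)(m₀)` determined by `c|_K`,
whence the essential neighbourhood `{g_{m₀,m}G₀ : m ∈ K}`.
-/

open Set

section DiscConvUniformity

variable {Q M : Type*} [TopologicalSpace M]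

theorem discConvUniformity_hasBasis :
    (@uniformity (M → Q) (discConvUniformity Q M)).HasBasis IsCompact
      fun K => {p : (M → Q) × (M → Q) | ∀ x ∈ K, p.1 x = p.2 x} :=
  hasBasis_biInf_principal'
    (fun K₁ h₁ K₂ h₂ => ⟨K₁ ∪ K₂, h₁.union h₂,
      fun _ hp x hx => hp x (Or.inl hx), fun _ hp x hx => hp x (Or.inr hx)⟩)
    ⟨∅, isCompact_empty⟩

theorem uniformContinuous_discConvUniformity_iff {Q' M' : Type*} [TopologicalSpace M']
    {F : (M → Q) → M' → Q'} :
    @UniformContinuous _ _ (discConvUniformity Q M) (discConvUniformity Q' M') F ↔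
      ∀ K : Set M', IsCompact K → ∃ K' : Set M, IsCompact K' ∧
        ∀ c c' : M → Q, (∀ x ∈ K', c x = c' x) → ∀ x ∈ K, F c x = F c' x :=
  letI := discConvUniformity Q M
  letI := discConvUniformity Q' M'
  discConvUniformity_hasBasis.uniformContinuous_iff discConvUniformity_hasBasis

end DiscConvUniformity

section CellSpace

variable {G M : Type*} [Group G] [MulAction G M] {m₀ : M} {coord : M → G}

theorem semiAct_mk (m : M) (g : G) :
    semiAct m₀ coord m (g : G ⧸ stabilizer G m₀) = (coord m * g) • m₀ := by
  simp only [semiAct, ofQuotientStabilizer_mk, mul_smul]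

theorem semiAct_mk_coord (hc : ∀ m, coord m • m₀ = m) (m m' : M) :
    semiAct m₀ coord m (coord m' : G ⧸ stabilizer G m₀) = coord m • m' := by
  rw [semiAct_mk, mul_smul, hc]

theorem semiAct_eq_smul_semiAct_origin (hc0 : coord m₀ = 1) (m : M)
    (n : G ⧸ stabilizer G m₀) :
    semiAct m₀ coord m n = coord m • semiAct m₀ coord m₀ n := by
  simp only [semiAct, hc0, one_smul]

theorem smul_semiAct (g : G) (m : M) (n : G ⧸ stabilizer G m₀) :
    g • semiAct m₀ coord m n =
      semiAct m₀ coord (g • m) (((coord (g • m))⁻¹ * g * coord m) • n) := by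
  induction n using QuotientGroup.induction_on with
  | H x =>
    rw [MulAction.Quotient.smul_coe, semiAct_mk, semiAct_mk, ← mul_smul, smul_eq_mul]
    group

theorem mk_coord_smul (hc : ∀ m, coord m • m₀ = m) (g : G) (m : M) :
    (coord (g • m) : G ⧸ stabilizer G m₀) = g • (coord m : G ⧸ stabilizer G m₀) := by
  rw [MulAction.Quotient.smul_coe, QuotientGroup.eq, mem_stabilizer_iff, mul_smul,
    smul_eq_mul, mul_smul, hc, inv_smul_eq_iff, hc]

theorem inv_coord_smul_mul_coord_mem_stabilizer (hc : ∀ m, coord m • m₀ = m) (g : G)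
    (m : M) : (coord (g • m))⁻¹ * g * coord m ∈ stabilizer G m₀ := by
  simpa only [smul_eq_mul, mul_assoc] using QuotientGroup.eq.mp (mk_coord_smul hc g m)

end CellSpace

theorem SemiProperSMul.exists_isCompact_superset_image_coord {G M : Type*} [Group G]
    [MulAction G M] [TopologicalSpace G] [TopologicalSpace M] (hsp : SemiProperSMul G M)
    {m₀ : M} {coord : M → G} (hc : ∀ m, coord m • m₀ = m) {K : Set M} (hK : IsCompact K) :
    ∃ C : Set G, IsCompact C ∧ coord '' K ⊆ C := by
  -- `m ↦ (g_{m₀,m}, m₀)` is a transversal of the fibres of the action map over `K × {m₀}`.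
  obtain ⟨C, hC, hsub⟩ := hsp.2 (K ×ˢ {m₀}) (hK.prod isCompact_singleton)
    (fun k => (coord k.1, k.2)) (by
      rintro ⟨m, m'⟩ ⟨-, rfl : m' = m₀⟩ -
      simp only [hc])
  refine ⟨Prod.fst '' C, hC.image continuous_fst, ?_⟩
  rintro _ ⟨m, hm, rfl⟩
  exact ⟨(coord m, m₀), hsub ⟨(m, m₀), ⟨hm, rfl⟩, ⟨(coord m, m₀), by simp only [hc]⟩, rfl⟩, rfl⟩

section GlobalTransition

variable {G M Q : Type*} [Group G] [MulAction G M] {m₀ : M} {coord : M → G}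
  {N : Set (G ⧸ stabilizer G m₀)} {δ : (N → Q) → Q}

theorem globalTrans_shiftConf (hc : ∀ m, coord m • m₀ = m) {H : Subgroup G}
    (hH : ∀ m, coord m ∈ H) (hN : ∀ g₀ ∈ stabilizer G m₀, ∀ n ∈ N, g₀ • n ∈ N)
    (hδ : ∀ h₀ ∈ H, ∀ hs : h₀ ∈ stabilizer G m₀, ∀ ℓ, δ (bulletAct hN h₀ hs ℓ) = δ ℓ)
    {h : G} (hh : h ∈ H) (c : M → Q) :
    globalTrans m₀ coord N δ (shiftConf h c) = shiftConf h (globalTrans m₀ coord N δ c) := by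
  funext m
  set g₀ := (coord (h⁻¹ • m))⁻¹ * h⁻¹ * coord m
  have hg₀ : g₀ ∈ stabilizer G m₀ := inv_coord_smul_mul_coord_mem_stabilizer hc h⁻¹ m
  have hg₀H : g₀ ∈ H := mul_mem (mul_mem (inv_mem (hH _)) (inv_mem hh)) (hH _)
  calc globalTrans m₀ coord N δ (shiftConf h c) m
      = δ (bulletAct hN g₀⁻¹ (inv_mem hg₀)
          fun n => c (semiAct m₀ coord (h⁻¹ • m) (n : G ⧸ stabilizer G m₀))) := by
        unfold bulletAct
        simp only [globalTrans, shiftConf, inv_inv, smul_semiAct, g₀]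
    _ = shiftConf h (globalTrans m₀ coord N δ c) m := hδ _ (inv_mem hg₀H) _ _

theorem uniformContinuous_globalTrans [TopologicalSpace G] [TopologicalSpace M]
    (hsp : SemiProperSMul G M) (hc : ∀ m, coord m • m₀ = m) (hc0 : coord m₀ = 1)
    {E : Set (G ⧸ stabilizer G m₀)} (hE : IsCompact (semiAct m₀ coord m₀ '' E))
    (hEδ : ∀ ℓ ℓ' : N → Q, (∀ n : N, (n : G ⧸ stabilizer G m₀) ∈ E → ℓ n = ℓ' n) →
      δ ℓ = δ ℓ') :
    @UniformContinuous _ _ (discConvUniformity Q M) (discConvUniformity Q M)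
      (globalTrans m₀ coord N δ) := by
  refine uniformContinuous_discConvUniformity_iff.mpr fun K hK => ?_
  obtain ⟨C, hC, hKC⟩ := hsp.exists_isCompact_superset_image_coord hc hK
  refine ⟨(fun p : G × M => p.1 • p.2) '' (C ×ˢ (semiAct m₀ coord m₀ '' E)),
    (hC.prod hE).image hsp.1, fun c c' hcc' m hm => hEδ _ _ fun n hn => hcc' _ ?_⟩
  exact ⟨(coord m, _), ⟨hKC ⟨m, hm, rfl⟩, n, hn, rfl⟩,
    (semiAct_eq_smul_semiAct_origin hc0 m n).symm⟩

end GlobalTransition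

section LocalRule

variable {G M Q : Type*} [Group G] [MulAction G M] {m₀ : M} {coord : M → G}
  {Δ : (M → Q) → M → Q}

def localRuleOf (m₀ : M) (coord : M → G) (Δ : (M → Q) → M → Q)
    (ℓ : ↥(univ : Set (G ⧸ stabilizer G m₀)) → Q) : Q :=
  Δ (fun m => ℓ ⟨coord m, mem_univ _⟩) m₀

theorem globalTrans_localRuleOf (hc : ∀ m, coord m • m₀ = m)
    (hΔ : ∀ m c, Δ (shiftConf (coord m) c) = shiftConf (coord m) (Δ c)) :
    globalTrans m₀ coord univ (localRuleOf m₀ coord Δ) = Δ := by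
  funext c m
  have hshift : shiftConf (coord m) (fun m' => c (coord m • m')) = c := by
    funext m'
    simp only [shiftConf, smul_inv_smul]
  have hm : (coord m)⁻¹ • m = m₀ := by rw [inv_smul_eq_iff, hc]
  calc globalTrans m₀ coord univ (localRuleOf m₀ coord Δ) c m
      = Δ (fun m' => c (coord m • m')) ((coord m)⁻¹ • m) := by
        simp only [globalTrans, localRuleOf, semiAct_mk_coord hc, hm]
    _ = shiftConf (coord m) (Δ fun m' => c (coord m • m')) m := rfl
    _ = Δ c m := by rw [← hΔ, hshift]

theorem localRuleOf_bulletAct (hc : ∀ m, coord m • m₀ = m)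
    (hN : ∀ g₀ ∈ stabilizer G m₀, ∀ n ∈ univ, g₀ • n ∈ univ) {h₀ : G}
    (hs : h₀ ∈ stabilizer G m₀) (hΔ : ∀ c, Δ (shiftConf h₀ c) = shiftConf h₀ (Δ c))
    (ℓ : ↥(univ : Set (G ⧸ stabilizer G m₀)) → Q) :
    localRuleOf m₀ coord Δ (bulletAct hN h₀ hs ℓ) = localRuleOf m₀ coord Δ ℓ := by
  have hconf : (fun m => bulletAct hN h₀ hs ℓ ⟨coord m, mem_univ _⟩) =
      shiftConf h₀ fun m => ℓ ⟨coord m, mem_univ _⟩ := by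
    funext m
    simp only [bulletAct, shiftConf, mk_coord_smul hc]
  rw [localRuleOf, hconf, hΔ, shiftConf, inv_mem hs, localRuleOf]

theorem exists_isCompact_essential_localRuleOf [TopologicalSpace M]
    (hc : ∀ m, coord m • m₀ = m) (hc0 : coord m₀ = 1)
    (huc : @UniformContinuous _ _ (discConvUniformity Q M) (discConvUniformity Q M) Δ) :
    ∃ E : Set (G ⧸ stabilizer G m₀), IsCompact (semiAct m₀ coord m₀ '' E) ∧
      ∀ ℓ ℓ' : ↥(univ : Set (G ⧸ stabilizer G m₀)) → Q,
        (∀ n : ↥(univ : Set (G ⧸ stabilizer G m₀)), (n : G ⧸ stabilizer G m₀) ∈ E →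
          ℓ n = ℓ' n) → localRuleOf m₀ coord Δ ℓ = localRuleOf m₀ coord Δ ℓ' := by
  obtain ⟨K, hK, hKΔ⟩ :=
    uniformContinuous_discConvUniformity_iff.mp huc {m₀} isCompact_singleton
  have hEK : semiAct m₀ coord m₀ '' ((fun m => (coord m : G ⧸ stabilizer G m₀)) '' K) = K := by
    simp only [image_image, semiAct_mk_coord hc, hc0, one_smul, image_id']
  refine ⟨(fun m => (coord m : G ⧸ stabilizer G m₀)) '' K, hEK.symm ▸ hK,
    fun ℓ ℓ' hℓ => hKΔ _ _ (fun m hm => hℓ _ ⟨m, hm, rfl⟩) m₀ rfl⟩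

end LocalRule

theorem uniform_curtis_hedlund_lyndon_general {G M : Type*} [Group G]
    [TopologicalSpace G] [TopologicalSpace M] [MulAction G M]
    (m₀ : M) (coord : M → G)
    (hc : ∀ m : M, coord m • m₀ = m) (hc0 : coord m₀ = 1)
    (hsp : SemiProperSMul G M)
    {Q : Type*} (Δ : (M → Q) → (M → Q))
    (H : Subgroup G) (hH : ∀ m : M, coord m ∈ H) :
    (∃ (N : Set (G ⧸ stabilizer G m₀))
       (hN : ∀ g₀ ∈ stabilizer G m₀, ∀ n ∈ N, g₀ • n ∈ N)
       (δ : (N → Q) → Q),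
        (∀ h₀ : G, h₀ ∈ H → ∀ hs : h₀ ∈ stabilizer G m₀,
          ∀ ℓ : N → Q, δ (bulletAct hN h₀ hs ℓ) = δ ℓ) ∧
        (∃ E : Set (G ⧸ stabilizer G m₀), E ⊆ N ∧
          IsCompact (semiAct m₀ coord m₀ '' E) ∧
          ∀ ℓ ℓ' : N → Q,
            (∀ n : N, (n : G ⧸ stabilizer G m₀) ∈ E → ℓ n = ℓ' n) → δ ℓ = δ ℓ') ∧
        Δ = globalTrans m₀ coord N δ)
    ↔ ((∀ h ∈ H, ∀ c : M → Q, Δ (shiftConf h c) = shiftConf h (Δ c)) ∧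
        @UniformContinuous (M → Q) (M → Q)
          (discConvUniformity Q M) (discConvUniformity Q M) Δ) := by
  constructor
  · rintro ⟨N, hN, δ, hδ, ⟨E, -, hE, hEδ⟩, rfl⟩
    exact ⟨fun h hh => globalTrans_shiftConf hc hH hN hδ hh,
      uniformContinuous_globalTrans hsp hc hc0 hE hEδ⟩
  · rintro ⟨hΔ, huc⟩
    obtain ⟨E, hE, hEδ⟩ := exists_isCompact_essential_localRuleOf hc hc0 huc
    exact ⟨univ, fun _ _ _ _ => mem_univ _, localRuleOf m₀ coord Δ,
      fun h₀ hh₀ hs => localRuleOf_bulletAct hc _ hs (hΔ h₀ hh₀),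
      ⟨E, subset_univ E, hE, hEδ⟩,
      (globalTrans_localRuleOf hc fun m => hΔ _ (hH m)).symm⟩

/-- **The uniform Curtis–Hedlund–Lyndon theorem.**  Let `𝓡` be a semi-proper cell
space, let `Q` be a set, let `Q^M` carry the uniformity of discrete convergence on
compacta, let `Δ : Q^M → Q^M` be a map, and let `H` be a subgroup of `G` with
`{g_{m₀,m} : m ∈ M} ⊆ H`.  The following are equivalent:
(1) `Δ` is the global transition function of a semi-cellular automaton `(Q, N, δ)`
over `𝓡` whose local transition function `δ` is `•_{H₀}`-invariant and which has a
compact essential neighbourhood;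
(2) `Δ` is `⇀_H`-equivariant and uniformly continuous. -/
theorem uniform_curtis_hedlund_lyndon {G M : Type*} [Group G]
    [TopologicalSpace G] [IsTopologicalGroup G] [TopologicalSpace M] [MulAction G M]
    (htrans : ∀ m m' : M, ∃ g : G, g • m = m')
    (m₀ : M) (coord : M → G)
    (hc : ∀ m : M, coord m • m₀ = m) (hc0 : coord m₀ = 1)
    (hsp : SemiProperSMul G M)
    {Q : Type*} (Δ : (M → Q) → (M → Q))
    (H : Subgroup G) (hH : ∀ m : M, coord m ∈ H) :
    (∃ (N : Set (G ⧸ stabilizer G m₀))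
       (hN : ∀ g₀ ∈ stabilizer G m₀, ∀ n ∈ N, g₀ • n ∈ N)
       (δ : (N → Q) → Q),
        (∀ h₀ : G, h₀ ∈ H → ∀ hs : h₀ ∈ stabilizer G m₀,
          ∀ ℓ : N → Q, δ (bulletAct hN h₀ hs ℓ) = δ ℓ) ∧
        (∃ E : Set (G ⧸ stabilizer G m₀), E ⊆ N ∧
          IsCompact (semiAct m₀ coord m₀ '' E) ∧
          ∀ ℓ ℓ' : N → Q,
            (∀ n : N, (n : G ⧸ stabilizer G m₀) ∈ E → ℓ n = ℓ' n) → δ ℓ = δ ℓ') ∧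
        Δ = globalTrans m₀ coord N δ)
    ↔ ((∀ h ∈ H, ∀ c : M → Q, Δ (shiftConf h c) = shiftConf h (Δ c)) ∧
        @UniformContinuous (M → Q) (M → Q)
          (discConvUniformity Q M) (discConvUniformity Q M) Δ) :=
  uniform_curtis_hedlund_lyndon_general m₀ coord hc hc0 hsp Δ H hH
end
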